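/- arXiv:1205.5511 — 2 statements merged into one kernel-verified Lean document; each statement's English description precedes it below -/
import Mathlib

section
/- Let L̄ be a generic closed curve configuration in the plane, i.e., a finite disjoint union of smoothly immersed circles, and v a unit vector such that projection to the line ℝv^⊥ restricted to L̄ is Morse. If a half-line from a v-tangency point p in direction v meets L̄ transversally in k points, then k ≤ t − 1, where t is the total number of v-tangencies of L̄. -/
open Set Filter Topology

/-- If `f` has nonzero derivative at `s`, then near `s` (punctured) `f` avoids the value `f s`. -/
private lemma ev_ne_of_hasDerivAt {f : ℝ → ℝ} {d s : ℝ} (hf : HasDerivAt f d s) (hd : d ≠ 0) :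
    ∀ᶠ x in 𝓝 s, x ≠ s → f x ≠ f s := by
  have h := hasDerivAt_iff_tendsto_slope.1 hf
  have h2 : ∀ᶠ x in 𝓝[≠] s, slope f s x ≠ 0 :=
    h (isOpen_compl_singleton.mem_nhds (by simpa using hd))
  rw [eventually_nhdsWithin_iff] at h2
  filter_upwards [h2] with x hx hxs hfx
  have hx' := hx (by simpa using hxs)
  apply hx'
  rw [slope_def_field, hfx, sub_self, zero_div]

private lemma deriv_per {f : ℝ → ℝ} (hper : ∀ s, f (s + 1) = f s) (x : ℝ) :
    deriv f (x + 1) = deriv f x := by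
  have h : (fun y => f (y + 1)) = f := funext hper
  calc deriv f (x + 1) = deriv (fun y => f (y + 1)) x := (deriv_comp_add_const f 1 x).symm
  _ = deriv f x := by rw [h]

/-- Roots of `f = c` in `[0,1)` are finite for a smooth periodic Morse function. -/
private lemma roots_finite {f : ℝ → ℝ} (hf : ContDiff ℝ (⊤ : ℕ∞) f) (hper : ∀ s, f (s + 1) = f s)
    (hm : ∀ s ∈ Ico (0:ℝ) 1, deriv f s = 0 → deriv (deriv f) s ≠ 0) (c : ℝ) :
    {s ∈ Ico (0:ℝ) 1 | f s = c}.Finite := by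
  have hdf : Differentiable ℝ f := hf.differentiable (by simp)
  have hdf' : Differentiable ℝ (deriv f) :=
    (contDiff_infty_iff_deriv.1 (hf.of_le (by simp))).2.differentiable (by simp)
  by_contra hinf
  have hsub : {s ∈ Ico (0:ℝ) 1 | f s = c} ⊆ Icc 0 1 := fun s hs => Ico_subset_Icc_self hs.1
  obtain ⟨x, hx, hacc⟩ :=
    Set.Infinite.exists_accPt_of_subset_isCompact hinf isCompact_Icc hsub
  rw [accPt_iff_nhds] at hacc
  have hfx : f x = c := by
    have hcl : x ∈ closure {s ∈ Ico (0:ℝ) 1 | f s = c} := by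
      rw [mem_closure_iff_nhds]
      intro U hU
      obtain ⟨y, hy, _⟩ := hacc U hU
      exact ⟨y, hy⟩
    have hcl2 : x ∈ closure (f ⁻¹' {c}) := closure_mono (fun s hs => hs.2) hcl
    have hc : IsClosed (f ⁻¹' {c}) := isClosed_singleton.preimage hdf.continuous
    simpa using hc.closure_subset hcl2
  rcases eq_or_ne (deriv f x) 0 with h0 | h0
  · -- critical accumulation point: Morse gives isolated zeros of deriv f, contradiction by Rolle
    have hxx : deriv (deriv f) x ≠ 0 := by
      rcases lt_or_eq_of_le hx.2 with hlt | h1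
      · exact hm x ⟨hx.1, hlt⟩ h0
      · have h := deriv_per hper 0
        rw [zero_add] at h
        have e0 : deriv f 0 = 0 := by rw [← h, ← h1]; exact h0
        have h3 := deriv_per (fun s => deriv_per hper s) 0
        rw [zero_add] at h3
        rw [h1, h3]
        exact hm 0 ⟨le_refl 0, one_pos⟩ e0
    have h1 : ∀ᶠ y in 𝓝 x, y ≠ x → deriv f y ≠ 0 := by
      filter_upwards [ev_ne_of_hasDerivAt (hdf' x).hasDerivAt hxx] with y hy hne
      rw [h0] at hy
      exact hy hne
    rw [Metric.eventually_nhds_iff] at h1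
    obtain ⟨ε, hε, hball⟩ := h1
    obtain ⟨y₁, ⟨hy₁b, hy₁R⟩, hy₁x⟩ := hacc (Metric.ball x ε) (Metric.ball_mem_nhds x hε)
    have b₁ : |y₁ - x| < ε := by rwa [Metric.mem_ball, Real.dist_eq] at hy₁b
    have hεy₁ : (0:ℝ) < |y₁ - x| := abs_pos.2 (sub_ne_zero.2 hy₁x)
    obtain ⟨y₂, ⟨hy₂b, hy₂R⟩, hy₂x⟩ :=
      hacc (Metric.ball x (|y₁ - x|)) (Metric.ball_mem_nhds x hεy₁)
    have b₂ : |y₂ - x| < |y₁ - x| := by rwa [Metric.mem_ball, Real.dist_eq] at hy₂b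
    have hεy₂ : (0:ℝ) < |y₂ - x| := abs_pos.2 (sub_ne_zero.2 hy₂x)
    obtain ⟨y₃, ⟨hy₃b, hy₃R⟩, hy₃x⟩ :=
      hacc (Metric.ball x (|y₂ - x|)) (Metric.ball_mem_nhds x hεy₂)
    have b₃ : |y₃ - x| < |y₂ - x| := by rwa [Metric.mem_ball, Real.dist_eq] at hy₃b
    have b₂' : |y₂ - x| < ε := b₂.trans b₁
    have b₃' : |y₃ - x| < ε := b₃.trans b₂'
    have hne12 : y₂ ≠ y₁ := by intro h; rw [h] at b₂; exact lt_irrefl _ b₂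
    have hne13 : y₃ ≠ y₁ := by intro h; rw [h] at b₃; exact lt_irrefl _ (b₃.trans b₂)
    have hne23 : y₃ ≠ y₂ := by intro h; rw [h] at b₃; exact lt_irrefl _ b₃
    have key : ∀ u w : ℝ, f u = c → f w = c → u < w → (x < u ∨ w < x) →
        |u - x| < ε → |w - x| < ε → False := by
      intro u w hu hw huw hside hub hwb
      obtain ⟨ξ, hξ, hξ0⟩ := exists_deriv_eq_zero huw hdf.continuous.continuousOn
        (hu.trans hw.symm)
      have hξx : ξ ≠ x := by
        rcases hside with h | h
        · exact fun he => absurd hξ.1 (by rw [he]; exact not_lt.2 h.le)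
        · exact fun he => absurd hξ.2 (by rw [he]; exact not_lt.2 h.le)
      rw [abs_sub_lt_iff] at hub hwb
      have hξb : |ξ - x| < ε := by
        rw [abs_sub_lt_iff]
        constructor <;> [nlinarith [hξ.1, hξ.2, hub.1, hub.2, hwb.1, hwb.2];
          nlinarith [hξ.1, hξ.2, hub.1, hub.2, hwb.1, hwb.2]]
      exact hball (by rwa [Real.dist_eq]) hξx hξ0
    have pair : ∀ u w : ℝ, f u = c → f w = c → u ≠ w →
        ((x < u ∧ x < w) ∨ (u < x ∧ w < x)) → |u - x| < ε → |w - x| < ε → False := by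
      intro u w hu hw hne hside hub hwb
      rcases hne.lt_or_gt with h | h
      · rcases hside with ⟨a, b⟩ | ⟨a, b⟩
        · exact key u w hu hw h (Or.inl a) hub hwb
        · exact key u w hu hw h (Or.inr b) hub hwb
      · rcases hside with ⟨a, b⟩ | ⟨a, b⟩
        · exact key w u hw hu h (Or.inl b) hwb hub
        · exact key w u hw hu h (Or.inr a) hwb hub
    have r₁ : f y₁ = c := hy₁R.2
    have r₂ : f y₂ = c := hy₂R.2
    have r₃ : f y₃ = c := hy₃R.2
    rcases hy₁x.lt_or_gt with s1 | s1 <;> rcases hy₂x.lt_or_gt with s2 | s2 <;>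
      rcases hy₃x.lt_or_gt with s3 | s3
    · exact pair y₁ y₂ r₁ r₂ (Ne.symm hne12) (Or.inr ⟨s1, s2⟩) b₁ b₂'
    · exact pair y₁ y₂ r₁ r₂ (Ne.symm hne12) (Or.inr ⟨s1, s2⟩) b₁ b₂'
    · exact pair y₁ y₃ r₁ r₃ (Ne.symm hne13) (Or.inr ⟨s1, s3⟩) b₁ b₃'
    · exact pair y₂ y₃ r₂ r₃ (Ne.symm hne23) (Or.inl ⟨s2, s3⟩) b₂' b₃'
    · exact pair y₂ y₃ r₂ r₃ (Ne.symm hne23) (Or.inr ⟨s2, s3⟩) b₂' b₃'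
    · exact pair y₁ y₃ r₁ r₃ (Ne.symm hne13) (Or.inl ⟨s1, s3⟩) b₁ b₃'
    · exact pair y₁ y₂ r₁ r₂ (Ne.symm hne12) (Or.inl ⟨s1, s2⟩) b₁ b₂'
    · exact pair y₁ y₂ r₁ r₂ (Ne.symm hne12) (Or.inl ⟨s1, s2⟩) b₁ b₂'
  · -- transversal accumulation point: impossible
    have h1 : ∀ᶠ y in 𝓝 x, y ≠ x → f y ≠ f x := ev_ne_of_hasDerivAt (hdf x).hasDerivAt h0
    obtain ⟨y, ⟨hyU, hyR⟩, hyx⟩ := hacc _ h1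
    exact hyU hyx (by rw [hyR.2, hfx])

/-- Core combinatorial lemma for a single circle: there is an injection from the roots of
`f = c` in `[0,1)` to critical points of `f` in `[0,1)` whose values avoid `c`. -/
private lemma circle_inj {f : ℝ → ℝ} (hf : ContDiff ℝ (⊤ : ℕ∞) f) (hper : ∀ s, f (s + 1) = f s)
    (hm : ∀ s ∈ Ico (0:ℝ) 1, deriv f s = 0 → deriv (deriv f) s ≠ 0) (c : ℝ) :
    ∃ ψ : ℝ → ℝ, (∀ s, s ∈ Ico (0:ℝ) 1 → f s = c →
        ψ s ∈ Ico (0:ℝ) 1 ∧ deriv f (ψ s) = 0 ∧ f (ψ s) ≠ c) ∧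
      Set.InjOn ψ {s ∈ Ico (0:ℝ) 1 | f s = c} := by
  classical
  have hRfin : {s ∈ Ico (0:ℝ) 1 | f s = c}.Finite := roots_finite hf hper hm c
  rcases eq_empty_or_nonempty {s ∈ Ico (0:ℝ) 1 | f s = c} with hRe | hRne
  · refine ⟨id, ?_, ?_⟩
    · intro s hs1 hs2
      have hmem : s ∈ {s ∈ Ico (0:ℝ) 1 | f s = c} := ⟨hs1, hs2⟩
      rw [hRe] at hmem
      exact absurd hmem (Set.notMem_empty s)
    · rw [hRe]; exact Set.injOn_empty _
  · set F : Finset ℝ := hRfin.toFinset with hF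
    have hmemF : ∀ r, r ∈ F ↔ r ∈ {s ∈ Ico (0:ℝ) 1 | f s = c} := fun r => hRfin.mem_toFinset
    have hFne : F.Nonempty := by
      obtain ⟨s, hs⟩ := hRne; exact ⟨s, (hmemF s).2 hs⟩
    set m₀ := F.min' hFne with hm₀
    have hm₀R : m₀ ∈ {s ∈ Ico (0:ℝ) 1 | f s = c} := (hmemF _).1 (F.min'_mem hFne)
    set nxt : ℝ → ℝ := fun s => if h : (F.filter (fun r => s < r)).Nonempty then
      (F.filter (fun r => s < r)).min' h else m₀ + 1 with hnxt
    have hnxt_gt : ∀ s ∈ {s ∈ Ico (0:ℝ) 1 | f s = c}, s < nxt s := by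
      intro s hs
      rw [hnxt]; dsimp only; split_ifs with h
      · exact (Finset.mem_filter.1 (Finset.min'_mem _ h)).2
      · have h1 := hs.1.2
        have h2 := hm₀R.1.1
        linarith
    have hnxt_lt2 : ∀ s ∈ {s ∈ Ico (0:ℝ) 1 | f s = c}, nxt s < 2 := by
      intro s hs
      rw [hnxt]; dsimp only; split_ifs with h
      · have := ((hmemF _).1 (Finset.filter_subset _ _ (Finset.min'_mem _ h))).1.2
        linarith
      · have := hm₀R.1.2
        linarith
    have hnxt_root : ∀ s ∈ {s ∈ Ico (0:ℝ) 1 | f s = c}, f (nxt s) = c := by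
      intro s hs
      rw [hnxt]; dsimp only; split_ifs with h
      · exact ((hmemF _).1 (Finset.filter_subset _ _ (Finset.min'_mem _ h))).2
      · exact (hper m₀).trans hm₀R.2
    have hnxt_no : ∀ s ∈ {s ∈ Ico (0:ℝ) 1 | f s = c}, ∀ u, s < u → u < nxt s → f u ≠ c := by
      intro s hs u hsu hun hc
      have hs0 : (0:ℝ) ≤ s := hs.1.1
      rw [hnxt] at hun; dsimp only at hun; split_ifs at hun with h
      · have hlt1 : u < 1 := by
          have := ((hmemF _).1 (Finset.filter_subset _ _ (Finset.min'_mem _ h))).1.2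
          linarith
        have huF : u ∈ F.filter (fun r => s < r) :=
          Finset.mem_filter.2 ⟨(hmemF u).2 ⟨⟨by linarith, hlt1⟩, hc⟩, hsu⟩
        exact absurd (Finset.min'_le _ _ huF) (not_le.2 hun)
      · rcases lt_or_ge u 1 with h1 | h1
        · exact h ⟨u, Finset.mem_filter.2 ⟨(hmemF u).2 ⟨⟨by linarith, h1⟩, hc⟩, hsu⟩⟩
        · have hm₀1 : m₀ < 1 := hm₀R.1.2
          have hfu1 : f (u - 1) = c := by
            have := hper (u - 1)
            rw [sub_add_cancel] at this
            rw [← this]; exact hc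
          have hu1F : u - 1 ∈ F := (hmemF _).2 ⟨⟨by linarith, by linarith⟩, hfu1⟩
          have := Finset.min'_le _ _ hu1F
          rw [← hm₀] at this
          linarith
    have key : ∀ s, s ∈ {s ∈ Ico (0:ℝ) 1 | f s = c} →
        ∃ ξ, ξ ∈ Ioo s (nxt s) ∧ deriv f ξ = 0 := by
      intro s hs
      obtain ⟨ξ, h1, h2⟩ := exists_deriv_eq_zero (hnxt_gt s hs)
        hf.continuous.continuousOn (hs.2.trans (hnxt_root s hs).symm)
      exact ⟨ξ, h1, h2⟩
    set ψ : ℝ → ℝ := fun s =>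
      if hs : s ∈ {s ∈ Ico (0:ℝ) 1 | f s = c} then
        (if (key s hs).choose < 1 then (key s hs).choose else (key s hs).choose - 1)
      else 0 with hψ
    have hder : Differentiable ℝ f := hf.differentiable (by simp)
    -- basic facts about ψ on roots
    have main : ∀ s (hs : s ∈ {s ∈ Ico (0:ℝ) 1 | f s = c}),
        ψ s ∈ Ico (0:ℝ) 1 ∧ deriv f (ψ s) = 0 ∧ f (ψ s) ≠ c := by
      intro s hs
      obtain ⟨hξI, hξ0⟩ := (key s hs).choose_spec
      set ξ := (key s hs).choose with hξdef
      have hψs : ψ s = if ξ < 1 then ξ else ξ - 1 := by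
        rw [hψ]; dsimp only; rw [dif_pos hs]
      have hfξ : f ξ ≠ c := hnxt_no s hs ξ hξI.1 hξI.2
      have hs0 : (0:ℝ) ≤ s := hs.1.1
      rw [hψs]; split_ifs with h1
      · exact ⟨⟨by linarith [hξI.1], h1⟩, hξ0, hfξ⟩
      · have h2 : ξ < 2 := lt_trans hξI.2 (hnxt_lt2 s hs)
        refine ⟨⟨by linarith, by linarith⟩, ?_, ?_⟩
        · have := deriv_per hper (ξ - 1)
          rw [sub_add_cancel] at this
          rw [← this]; exact hξ0
        · have := hper (ξ - 1)
          rw [sub_add_cancel] at this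
          rw [← this]; exact hfξ
    refine ⟨ψ, fun s hs1 hs2 => main s ⟨hs1, hs2⟩, ?_⟩
    -- injectivity via recovery function
    set ρ : ℝ → ℝ := fun w => if h : (F.filter (fun r => r < w)).Nonempty then
      (F.filter (fun r => r < w)).max' h else F.max' hFne with hρ
    have recov : ∀ s (hs : s ∈ {s ∈ Ico (0:ℝ) 1 | f s = c}), ρ (ψ s) = s := by
      intro s hs
      obtain ⟨hξI, hξ0⟩ := (key s hs).choose_spec
      set ξ := (key s hs).choose with hξdef
      have hψs : ψ s = if ξ < 1 then ξ else ξ - 1 := by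
        rw [hψ]; dsimp only; rw [dif_pos hs]
      have hsF : s ∈ F := (hmemF s).2 hs
      rw [hψs]; split_ifs with h1
      · -- w = ξ
        have hsfil : s ∈ F.filter (fun r => r < ξ) := Finset.mem_filter.2 ⟨hsF, hξI.1⟩
        have hne : (F.filter (fun r => r < ξ)).Nonempty := ⟨s, hsfil⟩
        rw [hρ]; dsimp only; rw [dif_pos hne]
        refine le_antisymm (Finset.max'_le _ _ _ ?_) (Finset.le_max' _ _ hsfil)
        intro r hr
        obtain ⟨hrF, hrξ⟩ := Finset.mem_filter.1 hr
        by_contra hcon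
        push_neg at hcon
        exact hnxt_no s hs r hcon (lt_trans hrξ hξI.2) ((hmemF r).1 hrF).2
      · -- w = ξ - 1, this forces s to be the maximal root
        push_neg at h1
        have hGempty : ¬(F.filter (fun r => s < r)).Nonempty := by
          intro hG
          have : nxt s = (F.filter (fun r => s < r)).min' hG := by
            rw [hnxt]; dsimp only; rw [dif_pos hG]
          have hlt1 : nxt s < 1 := by
            rw [this]
            exact ((hmemF _).1 (Finset.filter_subset _ _ (Finset.min'_mem _ hG))).1.2
          linarith [hξI.2]
        have hnxteq : nxt s = m₀ + 1 := by
          rw [hnxt]; dsimp only; rw [dif_neg hGempty]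
        have hwm₀ : ξ - 1 < m₀ := by
          have := hξI.2; rw [hnxteq] at this; linarith
        have hempty2 : ¬(F.filter (fun r => r < ξ - 1)).Nonempty := by
          rintro ⟨r, hr⟩
          obtain ⟨hrF, hrw⟩ := Finset.mem_filter.1 hr
          have := Finset.min'_le F r hrF
          rw [← hm₀] at this
          linarith
        rw [hρ]; dsimp only; rw [dif_neg hempty2]
        refine le_antisymm (Finset.max'_le _ _ _ ?_) (Finset.le_max' _ _ hsF)
        intro r hrF
        by_contra hcon
        push_neg at hcon
        exact hGempty ⟨r, Finset.mem_filter.2 ⟨hrF, hcon⟩⟩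
    intro s hsR t htR he
    rw [← recov s hsR, ← recov t htR, he]

/-- A combinatorial/Morse-theoretic model of Lemma `egyszerusit`:
the diagram `L̄` consists of `m` smoothly immersed circles `γ i` (1-periodic),
`v` is the vertical direction `(0,1)`, a `v`-tangency is a parameter where the
derivative of the first coordinate vanishes (assumed nondegenerate), `T` is the
(finite) set of tangencies and `K` is the set of transversal intersections of the
open vertical ray above the tangency `(i₀, s₀)` with the diagram; the ray is
assumed to avoid crossings.  Then `|K| ≤ |T| − 1`. -/
theorem stmt_15 {m : ℕ} (γ : Fin m → ℝ → ℝ × ℝ)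
    (hsmooth : ∀ i, ContDiff ℝ (⊤ : ℕ∞) (γ i))
    (hper : ∀ i s, γ i (s + 1) = γ i s)
    (himm : ∀ i s, deriv (γ i) s ≠ 0)
    (T : Set (Fin m × ℝ))
    (hT : T = {p : Fin m × ℝ | p.2 ∈ Set.Ico (0 : ℝ) 1 ∧
        deriv (fun s => (γ p.1 s).1) p.2 = 0})
    (hTfin : T.Finite)
    (hmorse : ∀ p ∈ T, deriv (deriv (fun s => (γ p.1 s).1)) p.2 ≠ 0)
    (i₀ : Fin m) (s₀ : ℝ) (hp : (i₀, s₀) ∈ T)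
    (K : Set (Fin m × ℝ))
    (hK : K = {p : Fin m × ℝ | p.2 ∈ Set.Ico (0 : ℝ) 1 ∧
        (γ p.1 p.2).1 = (γ i₀ s₀).1 ∧ (γ i₀ s₀).2 < (γ p.1 p.2).2 ∧
        deriv (fun s => (γ p.1 s).1) p.2 ≠ 0})
    (hnc : ∀ p ∈ K, ∀ q : Fin m × ℝ, q.2 ∈ Set.Ico (0 : ℝ) 1 →
        γ q.1 q.2 = γ p.1 p.2 → q = p) :
    K.ncard ≤ T.ncard - 1 := by
  classical
  have hψ : ∀ i : Fin m, ∃ ψ : ℝ → ℝ,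
      (∀ s, s ∈ Set.Ico (0:ℝ) 1 → (fun s => (γ i s).1) s = (γ i₀ s₀).1 →
        ψ s ∈ Set.Ico (0:ℝ) 1 ∧ deriv (fun s => (γ i s).1) (ψ s) = 0 ∧
          (fun s => (γ i s).1) (ψ s) ≠ (γ i₀ s₀).1) ∧
      Set.InjOn ψ {s ∈ Set.Ico (0:ℝ) 1 | (fun s => (γ i s).1) s = (γ i₀ s₀).1} := by
    intro i
    refine circle_inj ((hsmooth i).fst) (fun s => by rw [hper]) ?_ _
    intro s hs h0
    exact hmorse (i, s) (by rw [hT]; exact ⟨hs, h0⟩)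
  choose Ψ hΨ₁ hΨ₂ using hψ
  set Φ : Fin m × ℝ → Fin m × ℝ := fun p => (p.1, Ψ p.1 p.2) with hΦ
  have himage : Φ '' K ⊆ T \ {(i₀, s₀)} := by
    rintro _ ⟨p, hpK, rfl⟩
    rw [hK] at hpK
    obtain ⟨h1, h2, _, _⟩ := hpK
    obtain ⟨g1, g2, g3⟩ := hΨ₁ p.1 p.2 h1 h2
    refine ⟨by rw [hT]; exact ⟨g1, g2⟩, ?_⟩
    intro hmem
    rw [Set.mem_singleton_iff, Prod.ext_iff] at hmem
    obtain ⟨hi, hsval⟩ := hmem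
    apply g3
    simp only [hΦ] at hi hsval
    rw [hsval, hi]
  have hinj : Set.InjOn Φ K := by
    intro p hpK q hqK he
    rw [hK] at hpK hqK
    rw [hΦ] at he
    simp only [Prod.mk.injEq] at he
    obtain ⟨hi, hs⟩ := he
    rw [hi] at hs
    have h2 : p.2 = q.2 := by
      apply hΨ₂ q.1
      · rw [← hi]; exact ⟨hpK.1, hpK.2.1⟩
      · exact ⟨hqK.1, hqK.2.1⟩
      · exact hs
    exact Prod.ext hi h2
  calc K.ncard = (Φ '' K).ncard := (Set.ncard_image_of_injOn hinj).symm
  _ ≤ (T \ {(i₀, s₀)}).ncard := Set.ncard_le_ncard himage hTfin.diff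
  _ = T.ncard - 1 := Set.ncard_diff_singleton_of_mem hp
end

section
/- Let c ≥ 1, t ≥ 0 be reals, s ≥ 0 with s ≤ 8c + 7t² − 6t, and tb = −(c + t/2). Then tb ≤ −√s/(2√7). -/
theorem stmt_17 (c t s tb : ℝ) (hc : 1 ≤ c) (ht : 0 ≤ t) (hs : 0 ≤ s)
    (hsb : s ≤ 8 * c + 7 * t ^ 2 - 6 * t) (htb : tb = -(c + t / 2)) :
    28 * (c + t / 2) ^ 2 ≥ s ∧ tb ≤ -Real.sqrt s / (2 * Real.sqrt 7) := by
  have hx : (0:ℝ) ≤ c + t / 2 := by linarith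
  have h1 : 28 * (c + t / 2) ^ 2 ≥ s := by nlinarith
  refine ⟨h1, ?_⟩
  have h7 : (0:ℝ) < Real.sqrt 7 := Real.sqrt_pos.mpr (by norm_num)
  have hkey : Real.sqrt s ≤ 2 * Real.sqrt 7 * (c + t / 2) := by
    have := Real.sqrt_le_sqrt h1.le
    calc Real.sqrt s ≤ Real.sqrt (28 * (c + t / 2) ^ 2) := Real.sqrt_le_sqrt h1
      _ = Real.sqrt 28 * Real.sqrt ((c + t / 2) ^ 2) := Real.sqrt_mul (by norm_num) _
      _ = 2 * Real.sqrt 7 * (c + t / 2) := by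
          rw [Real.sqrt_sq hx, show (28:ℝ) = 2^2 * 7 by norm_num,
            Real.sqrt_mul (by positivity), Real.sqrt_sq (by norm_num)]
  rw [htb, neg_div, neg_le_neg_iff, div_le_iff₀ (by positivity)]
  linarith
end
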